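/- (Corollary 3.1.) In the setting of Theorem 3.1 (with P{ d_W(P*, P̂_N) > r_N } ≤ β_N and (x̂_N, k̂_N) a.s. RS-feasible for τ_ε), with probability at least 1 − β_N, both J* and E_{P*}[h(x̂_N,ξ)] lie in the interval [ −L·r_N + τ_ε/(1+ε), L·r_N + τ_ε ]. In particular, the upper endpoint involves only the Lipschitz constant L and not k̂_N. -/

import Mathlib

open MeasureTheory

noncomputable section

abbrev Vec (m : ℕ) := EuclideanSpace ℝ (Fin m)

/-- A coupling of two Borel probability measures on `Vec m`. -/
def IsCoupling {m : ℕ} (γ : Measure (Vec m × Vec m)) (P Q : Measure (Vec m)) : Prop :=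
  IsProbabilityMeasure γ ∧ γ.map Prod.fst = P ∧ γ.map Prod.snd = Q

/-- Type-1 Wasserstein distance: infimum of `∫ ‖ξ₁ - ξ₂‖₂ dγ` over couplings `γ`. -/
noncomputable def wDist {m : ℕ} (P Q : Measure (Vec m)) : ℝ :=
  sInf {c : ℝ | ∃ γ : Measure (Vec m × Vec m), IsCoupling γ P Q ∧ c = ∫ p, ‖p.1 - p.2‖ ∂γ}

/-- `(x, k)` is RS-feasible for reference value `τ` with respect to `Phat`. -/
def RSFeasible {m : ℕ} {X : Type*} (h : X → Vec m → ℝ)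
    (Phat : Measure (Vec m)) (τ : ℝ) (x : X) (k : ℝ) : Prop :=
  0 ≤ k ∧ ∀ P : Measure (Vec m), IsProbabilityMeasure P →
    Integrable (fun ξ => ‖ξ‖) P → (∫ ξ, h x ξ ∂P) - τ ≤ k * wDist P Phat

/-- Empirical measure `(1/N) ∑ δ_{x i}`. -/
noncomputable def empMeas {m N : ℕ} (xs : Fin N → Vec m) : Measure (Vec m) :=
  (N : ENNReal)⁻¹ • ∑ i : Fin N, Measure.dirac (xs i)

/-!
On the event `d_W(P*, P̂_N) ≤ r_N`, the easy half of Kantorovich–Rubinstein duality,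
`|E_P f - E_Q f| ≤ L · d_W(P, Q)` for `L`-Lipschitz `f`, puts `E_{P*}[h(x, ·)]` within `L r_N`
of `E_{P̂_N}[h(x, ·)]` uniformly in `x`, hence `J*` within `L r_N` of the empirical optimum
`τ_ε / (1 + ε)`. Testing RS-feasibility at `P = P̂_N` itself, where `d_W = 0`, gives
`E_{P̂_N}[h(x̂_N, ·)] ≤ τ_ε` whatever `k̂_N` is; this is why `k̂_N` does not enter the upper
endpoint.
-/

open Filter Set
open scoped NNReal

lemma LipschitzWith.integrable_of_integrable_norm {E F : Type*} [NormedAddCommGroup E]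
    [MeasurableSpace E] [OpensMeasurableSpace E] [NormedAddCommGroup F]
    [SecondCountableTopologyEither E F] {μ : Measure E} [IsFiniteMeasure μ] {f : E → F}
    {K : ℝ≥0} (hf : LipschitzWith K f) (hμ : Integrable (fun ξ => ‖ξ‖) μ) : Integrable f μ := by
  refine ((integrable_const ‖f 0‖).add (hμ.const_mul K)).mono'
    hf.continuous.aestronglyMeasurable (Eventually.of_forall fun ξ => ?_)
  calc ‖f ξ‖ ≤ ‖f 0‖ + ‖f ξ - f 0‖ := norm_le_insert' _ _
    _ ≤ ‖f 0‖ + K * ‖ξ‖ := by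
      simpa [dist_eq_norm] using add_le_add_left (hf.dist_le_mul ξ 0) ‖f 0‖

section Wasserstein

variable {m : ℕ}

lemma isCoupling_prod (P Q : Measure (Vec m)) [IsProbabilityMeasure P] [IsProbabilityMeasure Q] :
    IsCoupling (P.prod Q) P Q :=
  ⟨inferInstance, by simp, by simp⟩

lemma isCoupling_map_diag (P : Measure (Vec m)) [IsProbabilityMeasure P] :
    IsCoupling (P.map fun ξ => (ξ, ξ)) P P := by
  have hdiag : Measurable fun ξ : Vec m => (ξ, ξ) := measurable_id.prodMk measurable_id
  refine ⟨Measure.isProbabilityMeasure_map hdiag.aemeasurable, ?_, ?_⟩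
  · rw [Measure.map_map measurable_fst hdiag]
    exact Measure.map_id
  · rw [Measure.map_map measurable_snd hdiag]
    exact Measure.map_id

lemma wDist_nonneg (P Q : Measure (Vec m)) : 0 ≤ wDist P Q :=
  Real.sInf_nonneg <| by
    rintro _ ⟨γ, -, rfl⟩
    exact integral_nonneg fun _ => norm_nonneg _

lemma wDist_self (P : Measure (Vec m)) [IsProbabilityMeasure P] : wDist P P = 0 := by
  refine le_antisymm (csInf_le ?_ ⟨_, isCoupling_map_diag P, ?_⟩) (wDist_nonneg P P)
  · refine ⟨0, ?_⟩
    rintro _ ⟨γ, -, rfl⟩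
    exact integral_nonneg fun _ => norm_nonneg _
  · rw [integral_map (by fun_prop) (by fun_prop)]
    simp

lemma IsCoupling.abs_integral_sub_le {γ : Measure (Vec m × Vec m)} {P Q : Measure (Vec m)}
    (hγ : IsCoupling γ P Q) {f : Vec m → ℝ} {K : ℝ≥0} (hf : LipschitzWith K f)
    (hP : Integrable (fun ξ => ‖ξ‖) P) (hQ : Integrable (fun ξ => ‖ξ‖) Q) :
    |∫ ξ, f ξ ∂P - ∫ ξ, f ξ ∂Q| ≤ K * ∫ p, ‖p.1 - p.2‖ ∂γ := by
  obtain ⟨hγ, rfl, rfl⟩ := hγ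
  have hf₁ : Integrable (fun p : Vec m × Vec m => f p.1) γ :=
    (hf.integrable_of_integrable_norm hP).comp_measurable measurable_fst
  have hf₂ : Integrable (fun p : Vec m × Vec m => f p.2) γ :=
    (hf.integrable_of_integrable_norm hQ).comp_measurable measurable_snd
  have hdist : Integrable (fun p : Vec m × Vec m => ‖p.1 - p.2‖) γ :=
    ((hP.comp_measurable measurable_fst).add (hQ.comp_measurable measurable_snd)).mono'
      (by fun_prop) (Eventually.of_forall fun p => by simpa using norm_sub_le p.1 p.2)
  rw [integral_map measurable_fst.aemeasurable hf.continuous.aestronglyMeasurable,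
    integral_map measurable_snd.aemeasurable hf.continuous.aestronglyMeasurable,
    ← integral_sub hf₁ hf₂, ← integral_const_mul]
  calc |∫ p, (f p.1 - f p.2) ∂γ| ≤ ∫ p, |f p.1 - f p.2| ∂γ := abs_integral_le_integral_abs
    _ ≤ ∫ p, K * ‖p.1 - p.2‖ ∂γ :=
      integral_mono (hf₁.sub hf₂).abs (hdist.const_mul K) fun p => by
        simpa [Real.dist_eq, dist_eq_norm] using hf.dist_le_mul p.1 p.2

lemma abs_integral_sub_le_mul_wDist {P Q : Measure (Vec m)} [IsProbabilityMeasure P]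
    [IsProbabilityMeasure Q] {f : Vec m → ℝ} {K : ℝ≥0} (hf : LipschitzWith K f)
    (hP : Integrable (fun ξ => ‖ξ‖) P) (hQ : Integrable (fun ξ => ‖ξ‖) Q) :
    |∫ ξ, f ξ ∂P - ∫ ξ, f ξ ∂Q| ≤ K * wDist P Q := by
  rw [wDist, ← smul_eq_mul, ← Real.sInf_smul_of_nonneg K.coe_nonneg]
  refine le_csInf (Set.Nonempty.smul_set ⟨_, P.prod Q, isCoupling_prod P Q, rfl⟩) ?_
  rintro _ ⟨_, ⟨γ, hγ, rfl⟩, rfl⟩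
  exact hγ.abs_integral_sub_le hf hP hQ

lemma isProbabilityMeasure_empMeas {N : ℕ} (hN : 0 < N) (xs : Fin N → Vec m) :
    IsProbabilityMeasure (empMeas xs) := by
  constructor
  simp only [empMeas, Measure.smul_apply, Measure.finsetSum_apply, measure_univ,
    Finset.sum_const, Finset.card_univ, Fintype.card_fin, nsmul_eq_mul, mul_one, smul_eq_mul]
  exact ENNReal.inv_mul_cancel (by exact_mod_cast hN.ne') (by simp)

lemma integrable_empMeas {E : Type*} [NormedAddCommGroup E] {N : ℕ} (hN : 0 < N)
    (xs : Fin N → Vec m) (f : Vec m → E) : Integrable f (empMeas xs) := by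
  refine Integrable.smul_measure ?_ (by simp [hN.ne'])
  rw [integrable_finsetSum_measure]
  exact fun i _ => integrable_dirac enorm_lt_top

end Wasserstein

lemma iInf_and_apply_mem_Icc_of_abs_sub_le {X : Type*} [Nonempty X] {F G : X → ℝ} {δ τ : ℝ}
    {x₀ : X} (hG : BddBelow (range G)) (hFG : ∀ x, |F x - G x| ≤ δ) (hx₀ : G x₀ ≤ τ) :
    (⨅ x, F x) ∈ Icc (-δ + ⨅ x, G x) (δ + τ) ∧ F x₀ ∈ Icc (-δ + ⨅ x, G x) (δ + τ) := by
  have hlow : ∀ x, -δ + ⨅ x, G x ≤ F x := fun x => by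
    linarith [ciInf_le hG x, (abs_le.mp (hFG x)).1]
  have hup : F x₀ ≤ δ + τ := by linarith [(abs_le.mp (hFG x₀)).2]
  have hF : ⨅ x, F x ≤ F x₀ := ciInf_le ⟨_, forall_mem_range.2 hlow⟩ x₀
  exact ⟨⟨le_ciInf hlow, hF.trans hup⟩, hlow x₀, hup⟩

lemma ofReal_one_sub_le_measure_of_ae_imp {Ω : Type*} [MeasurableSpace Ω] {μ : Measure Ω}
    [IsProbabilityMeasure μ] {p q : Ω → Prop} {β : ℝ} (hβ : 0 ≤ β)
    (hp : μ {ω | ¬ p ω} ≤ ENNReal.ofReal β) (hpq : ∀ᵐ ω ∂μ, p ω → q ω) :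
    ENNReal.ofReal (1 - β) ≤ μ {ω | q ω} :=
  calc ENNReal.ofReal (1 - β) = 1 - ENNReal.ofReal β := by
        rw [ENNReal.ofReal_sub _ hβ, ENNReal.ofReal_one]
    _ ≤ 1 - μ {ω | ¬ p ω} := tsub_le_tsub_left hp _
    _ ≤ μ {ω | p ω} := tsub_le_iff_right.2 <| by
        simpa only [measure_univ, compl_ofPred] using measure_univ_le_add_compl (μ := μ) {ω | p ω}
    _ ≤ μ {ω | q ω} := measure_mono_ae hpq

theorem confidence_interval_lipschitz_endpoints_general {m N : ℕ} (hN : 0 < N)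
    {X : Type*} [Nonempty X]
    {Ω : Type*} [MeasurableSpace Ω] (μ : Measure Ω) [IsProbabilityMeasure μ]
    (h : X → Vec m → ℝ) (L : ℝ) (hL : 0 ≤ L)
    (hLip : ∀ x ξ η, |h x ξ - h x η| ≤ L * ‖ξ - η‖)
    (Pstar : Measure (Vec m)) [IsProbabilityMeasure Pstar]
    (hPstarmom : Integrable (fun ξ => ‖ξ‖) Pstar)
    -- i.i.d. samples from Pstar
    (ξs : Fin N → Ω → Vec m)
    -- empirical measure
    (Phat : Ω → Measure (Vec m)) (hPhat : ∀ ω, Phat ω = empMeas (fun i => ξs i ω))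
    -- reference value
    (ε : ℝ) (hε : 0 < ε)
    (τ : Ω → ℝ) (hτ : ∀ ω, τ ω = (1 + ε) * ⨅ x, ∫ ξ, h x ξ ∂(Phat ω))
    (hfin : ∀ᵐ ω ∂μ, BddBelow (Set.range fun x => ∫ ξ, h x ξ ∂(Phat ω)))
    -- almost surely RS-feasible random pair
    (xhat : Ω → X) (khat : Ω → ℝ)
    (hfeas : ∀ᵐ ω ∂μ, RSFeasible h (Phat ω) (τ ω) (xhat ω) (khat ω))
    -- concentration of the empirical measure
    (r β : ℝ) (hβ0 : 0 < β)
    (htail : μ {ω | r < wDist Pstar (Phat ω)} ≤ ENNReal.ofReal β) :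
    ENNReal.ofReal (1 - β) ≤
      μ {ω | (⨅ x, ∫ ξ, h x ξ ∂Pstar) ∈
               Set.Icc (-L * r + τ ω / (1 + ε)) (L * r + τ ω) ∧
             (∫ ξ, h (xhat ω) ξ ∂Pstar) ∈
               Set.Icc (-L * r + τ ω / (1 + ε)) (L * r + τ ω)} := by
  have hLipW : ∀ x, LipschitzWith L.toNNReal (h x) := fun x =>
    .of_dist_le' fun ξ η => by simpa only [dist_eq_norm, Real.norm_eq_abs] using hLip x ξ η
  refine ofReal_one_sub_le_measure_of_ae_imp (p := fun ω => wDist Pstar (Phat ω) ≤ r) hβ0.le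
    (by simpa only [not_le] using htail) ?_
  filter_upwards [hfin, hfeas] with ω hbdd hfeasω hW
  have hprob : IsProbabilityMeasure (Phat ω) := hPhat ω ▸ isProbabilityMeasure_empMeas hN _
  have hmom : Integrable (‖·‖) (Phat ω) := hPhat ω ▸ integrable_empMeas hN _ _
  have hclose : ∀ x, |∫ ξ, h x ξ ∂Pstar - ∫ ξ, h x ξ ∂(Phat ω)| ≤ L * r := fun x =>
    calc _ ≤ L * wDist Pstar (Phat ω) := by
          simpa only [Real.coe_toNNReal L hL] using
            abs_integral_sub_le_mul_wDist (hLipW x) hPstarmom hmom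
      _ ≤ L * r := mul_le_mul_of_nonneg_left hW hL
  have hxhat : ∫ ξ, h (xhat ω) ξ ∂(Phat ω) ≤ τ ω := by
    simpa [wDist_self] using hfeasω.2 _ hprob hmom
  have hτ' : τ ω / (1 + ε) = ⨅ x, ∫ ξ, h x ξ ∂(Phat ω) := by
    rw [hτ ω]
    field_simp
  rw [hτ', neg_mul]
  exact iInf_and_apply_mem_Icc_of_abs_sub_le hbdd hclose hxhat

/-- Corollary 3.1: with probability at least 1 - beta_N, both J* and
E_{P*}[h(xhat_N,.)] lie in [-L r_N + tau_eps/(1+eps), L r_N + tau_eps]; the upper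
endpoint involves only the Lipschitz constant L and not khat_N. -/
theorem confidence_interval_lipschitz_endpoints {m N : ℕ} (hN : 0 < N)
    {X : Type*} [Nonempty X]
    {Ω : Type*} [MeasurableSpace Ω] (μ : Measure Ω) [IsProbabilityMeasure μ]
    (h : X → Vec m → ℝ) (L : ℝ) (hL : 0 ≤ L)
    (hLip : ∀ x ξ η, |h x ξ - h x η| ≤ L * ‖ξ - η‖)
    (hInt : ∀ x (P : Measure (Vec m)), IsProbabilityMeasure P →
      Integrable (fun ξ => ‖ξ‖) P → Integrable (h x) P)
    (Pstar : Measure (Vec m)) [IsProbabilityMeasure Pstar]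
    (hPstarmom : Integrable (fun ξ => ‖ξ‖) Pstar)
    -- i.i.d. samples from Pstar
    (ξs : Fin N → Ω → Vec m) (hmeas : ∀ i, Measurable (ξs i))
    (hindep : ProbabilityTheory.iIndepFun ξs μ)
    (hdist : ∀ i, μ.map (ξs i) = Pstar)
    -- empirical measure
    (Phat : Ω → Measure (Vec m)) (hPhat : ∀ ω, Phat ω = empMeas (fun i => ξs i ω))
    -- reference value
    (ε : ℝ) (hε : 0 < ε)
    (τ : Ω → ℝ) (hτ : ∀ ω, τ ω = (1 + ε) * ⨅ x, ∫ ξ, h x ξ ∂(Phat ω))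
    (hfin : ∀ᵐ ω ∂μ, BddBelow (Set.range fun x => ∫ ξ, h x ξ ∂(Phat ω)))
    -- almost surely RS-feasible random pair
    (xhat : Ω → X) (khat : Ω → ℝ)
    (hfeas : ∀ᵐ ω ∂μ, RSFeasible h (Phat ω) (τ ω) (xhat ω) (khat ω))
    -- concentration of the empirical measure
    (r β : ℝ) (hr : 0 < r) (hβ0 : 0 < β) (hβ1 : β < 1)
    (htail : μ {ω | r < wDist Pstar (Phat ω)} ≤ ENNReal.ofReal β) :
    ENNReal.ofReal (1 - β) ≤
      μ {ω | (⨅ x, ∫ ξ, h x ξ ∂Pstar) ∈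
               Set.Icc (-L * r + τ ω / (1 + ε)) (L * r + τ ω) ∧
             (∫ ξ, h (xhat ω) ξ ∂Pstar) ∈
               Set.Icc (-L * r + τ ω / (1 + ε)) (L * r + τ ω)} :=
  confidence_interval_lipschitz_endpoints_general hN μ h L hL hLip Pstar hPstarmom ξs Phat hPhat ε
    hε τ hτ hfin xhat khat hfeas r β hβ0 htail
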